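/- Let ⟨K,B,P,N⟩_R be a DPI, D a set of minimal diagnoses w.r.t. it, and Q a query w.r.t. D with Q ⊆ K. Then the q-partition ⟨dx(Q), dnx(Q), dz(Q)⟩ of Q is a canonical q-partition (i.e., dz(Q) = ∅ and the q-partition of the canonical query Q_can(dx(Q)) equals ⟨dx(Q), dnx(Q), ∅⟩). -/

import Mathlib

namespace KBDDiag

/-- A diagnosis problem instance (DPI) `⟨K,B,P,N⟩_R` over a Tarskian logic on sentences `L`. -/
structure DPI (L : Type*) where
  /-- the entailment relation of the logic -/
  entails : Set L → L → Prop
  /-- entailment is monotonic -/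
  entails_mono : ∀ (X Y : Set L) (α : L), entails X α → entails (X ∪ Y) α
  /-- entailment is idempotent -/
  entails_idem : ∀ (X A : Set L) (β : L),
    (∀ α ∈ A, entails X α) → entails (X ∪ A) β → entails X β
  /-- entailment is extensive -/
  entails_ext : ∀ (X : Set L) (α : L), α ∈ X → entails X α
  /-- the (possibly faulty) KB -/
  K : Set L
  /-- the background KB -/
  B : Set L
  /-- the positive test cases -/
  P : Set (Set L)
  /-- the negative test cases -/
  N : Set (Set L)
  /-- requirements: `r X` means the KB `X` satisfies requirement `r` -/
  R : Set (Set L → Prop)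
  K_finite : K.Finite
  B_finite : B.Finite
  K_B_disjoint : K ∩ B = ∅
  P_finite : P.Finite
  P_mem_finite : ∀ p ∈ P, Set.Finite p
  N_finite : N.Finite
  N_mem_finite : ∀ n ∈ N, Set.Finite n
  /-- violation of a requirement is monotone -/
  viol_mono : ∀ r ∈ R, ∀ X Y : Set L, X ⊆ Y → ¬ r X → ¬ r Y
  /-- requirements are preserved under adding entailed sentences -/
  sat_entailed : ∀ r ∈ R, ∀ X A : Set L, r X → (∀ α ∈ A, entails X α) → r (X ∪ A)
  /-- the background KB satisfies every requirement -/
  B_sat : ∀ r ∈ R, r B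

namespace DPI

variable {L : Type*} (d : DPI L)

/-- `X ⊨ Y` : X entails every sentence of Y. -/
def EntailsAll (X Y : Set L) : Prop := ∀ α ∈ Y, d.entails X α

/-- `U_P`, the union of all positive test cases. -/
def UP : Set L := ⋃₀ d.P

/-- `Ks` is a solution KB w.r.t. the DPI. -/
def IsSolutionKB (Ks : Set L) : Prop :=
  (∀ r ∈ d.R, r (Ks ∪ d.B)) ∧
  (∀ p ∈ d.P, d.EntailsAll (Ks ∪ d.B) p) ∧
  (∀ n ∈ d.N, ¬ d.EntailsAll (Ks ∪ d.B) n)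

/-- `D` is a diagnosis w.r.t. the DPI. -/
def IsDiagnosis (D : Set L) : Prop :=
  D ⊆ d.K ∧ d.IsSolutionKB ((d.K \ D) ∪ d.UP)

/-- `D` is a minimal diagnosis w.r.t. the DPI. -/
def IsMinDiagnosis (D : Set L) : Prop :=
  d.IsDiagnosis D ∧ ∀ D' ⊂ D, ¬ d.IsDiagnosis D'

/-- `C` is a conflict w.r.t. the DPI. -/
def IsConflict (C : Set L) : Prop :=
  C ⊆ d.K ∧ ¬ d.IsSolutionKB (C ∪ d.UP)

/-- `C` is a minimal conflict w.r.t. the DPI. -/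
def IsMinConflict (C : Set L) : Prop :=
  d.IsConflict C ∧ ∀ C' ⊂ C, ¬ d.IsConflict C'

/-- `Ks` is a maximal solution KB w.r.t. the DPI. -/
def IsMaxSolutionKB (Ks : Set L) : Prop :=
  d.IsSolutionKB Ks ∧ ¬ ∃ K' : Set L, d.IsSolutionKB K' ∧ Ks ∩ d.K ⊂ K' ∩ d.K

/-- `K*_i = (K \ D_i) ∪ B ∪ U_P`. -/
def Kstar (Di : Set L) : Set L := (d.K \ Di) ∪ d.B ∪ d.UP

/-- `X` violates some requirement in `R` or entails some negative test case. -/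
def Violates (X : Set L) : Prop :=
  (∃ r ∈ d.R, ¬ r X) ∨ (∃ n ∈ d.N, d.EntailsAll X n)

/-- `dx(X)` w.r.t. the leading diagnoses `Ds`. -/
def dxS (Ds : Set (Set L)) (X : Set L) : Set (Set L) :=
  {Di ∈ Ds | d.EntailsAll (d.Kstar Di) X}

/-- `dnx(X)` w.r.t. the leading diagnoses `Ds`. -/
def dnxS (Ds : Set (Set L)) (X : Set L) : Set (Set L) :=
  {Di ∈ Ds | d.Violates (d.Kstar Di ∪ X)}

/-- `dz(X)` w.r.t. the leading diagnoses `Ds`. -/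
def dzS (Ds : Set (Set L)) (X : Set L) : Set (Set L) :=
  Ds \ (d.dxS Ds X ∪ d.dnxS Ds X)

/-- `Q` is a query w.r.t. the leading diagnoses `Ds`. -/
def IsQuery (Ds : Set (Set L)) (Q : Set L) : Prop :=
  Q.Nonempty ∧ (d.dxS Ds Q).Nonempty ∧ (d.dnxS Ds Q).Nonempty

/-- The canonical query `Q_can(S) = (K \ U_S) ∩ (U_D \ I_D)` w.r.t. the seed `S`. -/
def Qcan (Ds S : Set (Set L)) : Set L := (d.K \ ⋃₀ S) ∩ (⋃₀ Ds \ ⋂₀ Ds)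

/-- `⟨dxp, dnxp, ∅⟩` is a canonical q-partition of `Ds`. -/
def IsCanonicalQPartition (Ds dxp dnxp : Set (Set L)) : Prop :=
  dxp ∪ dnxp = Ds ∧ dxp ∩ dnxp = ∅ ∧
  dxp.Nonempty ∧ dxp ⊂ Ds ∧
  (d.Qcan Ds dxp).Nonempty ∧
  d.dxS Ds (d.Qcan Ds dxp) = dxp ∧
  d.dnxS Ds (d.Qcan Ds dxp) = dnxp ∧
  d.dzS Ds (d.Qcan Ds dxp) = ∅

end DPI

/-- `Disc_D = U_D \ I_D`, the discrimination sentences w.r.t. `Ds`. -/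
def Disc {L : Type*} (Ds : Set (Set L)) : Set L := ⋃₀ Ds \ ⋂₀ Ds

/-- `H` is a hitting set of the collection `S`. -/
def IsHittingSet {α : Type*} (S : Set (Set α)) (H : Set α) : Prop :=
  H ⊆ ⋃₀ S ∧ ∀ s ∈ S, (H ∩ s).Nonempty

/-- `H` is a minimal hitting set of the collection `S`. -/
def IsMinHittingSet {α : Type*} (S : Set (Set α)) (H : Set α) : Prop :=
  IsHittingSet S H ∧ ∀ H' ⊂ H, ¬ IsHittingSet S H'

/-- `MHS S`, the set of all minimal hitting sets of `S`. -/
def MHS {α : Type*} (S : Set (Set α)) : Set (Set α) :=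
  {H | IsMinHittingSet S H}

/-!
For `X ⊆ K` and a minimal diagnosis `D`, whether `D` predicts `X` true or false depends only on
whether `D` meets `X`: if it does not, then `X ⊆ K*_D`; if it does and `K*_D ∪ X` were free of
violations, then `D \ X` would be a smaller diagnosis. So `dz(X) = ∅`, and subsets of `K` met
by the same leading diagnoses have the same q-partition. The canonical query of `dx(Q)` is met
by exactly the diagnoses that meet `Q`: it avoids every member of `dx(Q)`, and, since
`dx(Q) ≠ ∅`, it contains `D ∩ Q` for every leading diagnosis `D`.
-/

theorem disjoint_canonicalQuery_iff {α : Type*} {Ds : Set (Set α)} {K Q D₀ D : Set α}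
    (hQK : Q ⊆ K) (hD₀ : D₀ ∈ Ds) (hD₀Q : Disjoint D₀ Q) (hD : D ∈ Ds) :
    Disjoint D ((K \ ⋃₀ {D' ∈ Ds | Disjoint D' Q}) ∩ (⋃₀ Ds \ ⋂₀ Ds)) ↔ Disjoint D Q := by
  rw [Set.disjoint_left] at hD₀Q
  simp only [Set.disjoint_left]
  constructor
  · intro h a haD haQ
    refine h haD ⟨⟨hQK haQ, ?_⟩, ⟨D, hD, haD⟩, fun hall => hD₀Q (hall D₀ hD₀) haQ⟩
    rintro ⟨D', ⟨-, hD'Q⟩, haD'⟩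
    exact hD'Q haD' haQ
  · intro h a haD haQc
    exact haQc.1.2 ⟨D, ⟨hD, h⟩, haD⟩

namespace DPI

variable {L : Type*} (d : DPI L)

theorem isDiagnosis_iff (D : Set L) :
    d.IsDiagnosis D ↔
      D ⊆ d.K ∧ (∀ p ∈ d.P, d.EntailsAll (d.Kstar D) p) ∧ ¬ d.Violates (d.Kstar D) := by
  have hK : (d.K \ D) ∪ d.UP ∪ d.B = d.Kstar D := by
    unfold Kstar
    rw [Set.union_right_comm]
  simp only [IsDiagnosis, IsSolutionKB, Violates, hK, not_or, not_exists, not_and, not_not]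
  tauto

theorem kstar_union_eq_kstar_diff {X : Set L} (hX : X ⊆ d.K) (D : Set L) :
    d.Kstar D ∪ X = d.Kstar (D \ X) := by
  ext a
  have := @hX a
  simp only [Kstar, Set.mem_union, Set.mem_sdiff]
  tauto

theorem subset_kstar_of_disjoint {X D : Set L} (hX : X ⊆ d.K) (hDX : Disjoint D X) :
    X ⊆ d.Kstar D :=
  fun _ ha => Or.inl (Or.inl ⟨hX ha, fun haD => Set.disjoint_left.mp hDX haD ha⟩)

theorem entailsAll_of_subset {X Y : Set L} (h : X ⊆ Y) : d.EntailsAll Y X :=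
  fun a ha => d.entails_ext Y a (h ha)

theorem not_violates_union {X Y : Set L} (hY : ¬ d.Violates Y) (hYX : d.EntailsAll Y X) :
    ¬ d.Violates (Y ∪ X) := by
  rintro (⟨r, hr, hrYX⟩ | ⟨n, hn, hYXn⟩)
  · have hrY : r Y := by_contra fun h => hY (Or.inl ⟨r, hr, h⟩)
    exact hrYX (d.sat_entailed r hr Y X hrY hYX)
  · exact hY (Or.inr ⟨n, hn, fun β hβ => d.entails_idem Y X β hYX (hYXn β hβ)⟩)

theorem disjoint_of_not_violates {D X : Set L} (hD : d.IsMinDiagnosis D) (hX : X ⊆ d.K)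
    (hDX : ¬ d.Violates (d.Kstar D ∪ X)) : Disjoint D X := by
  obtain ⟨hDiag, hMin⟩ := hD
  obtain ⟨hDK, hP, -⟩ := (d.isDiagnosis_iff D).1 hDiag
  have hDiff : d.IsDiagnosis (D \ X) := by
    rw [isDiagnosis_iff, ← d.kstar_union_eq_kstar_diff hX]
    exact ⟨Set.sdiff_subset.trans hDK, fun p hp a ha => d.entails_mono _ X a (hP p hp a ha), hDX⟩
  by_contra hNot
  exact hMin _ (Set.sdiff_subset.ssubset_of_ne (mt sdiff_eq_left.mp hNot)) hDiff

variable {Ds : Set (Set L)}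

theorem dxS_eq (hDs : ∀ D ∈ Ds, d.IsMinDiagnosis D) {X : Set L} (hX : X ⊆ d.K) :
    d.dxS Ds X = {D ∈ Ds | Disjoint D X} := by
  refine Set.ext fun D => and_congr_right fun hD => ⟨fun hDX => ?_, fun hDX => ?_⟩
  · have hKstar := ((d.isDiagnosis_iff D).1 (hDs D hD).1).2.2
    exact d.disjoint_of_not_violates (hDs D hD) hX (d.not_violates_union hKstar hDX)
  · exact d.entailsAll_of_subset (d.subset_kstar_of_disjoint hX hDX)

theorem dnxS_eq (hDs : ∀ D ∈ Ds, d.IsMinDiagnosis D) {X : Set L} (hX : X ⊆ d.K) :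
    d.dnxS Ds X = {D ∈ Ds | ¬ Disjoint D X} := by
  refine Set.ext fun D => and_congr_right fun hD => ⟨fun hDX hDisj => ?_, fun hDX => ?_⟩
  · have hKstar := ((d.isDiagnosis_iff D).1 (hDs D hD).1).2.2
    rw [Set.union_eq_left.mpr (d.subset_kstar_of_disjoint hX hDisj)] at hDX
    exact hKstar hDX
  · exact by_contra fun h => hDX (d.disjoint_of_not_violates (hDs D hD) hX h)

theorem dxS_union_dnxS (hDs : ∀ D ∈ Ds, d.IsMinDiagnosis D) {X : Set L} (hX : X ⊆ d.K) :
    d.dxS Ds X ∪ d.dnxS Ds X = Ds := by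
  rw [d.dxS_eq hDs hX, d.dnxS_eq hDs hX, ← Set.sep_or]
  simp only [em, Set.sep_true]

theorem dxS_inter_dnxS (hDs : ∀ D ∈ Ds, d.IsMinDiagnosis D) {X : Set L} (hX : X ⊆ d.K) :
    d.dxS Ds X ∩ d.dnxS Ds X = ∅ := by
  rw [d.dxS_eq hDs hX, d.dnxS_eq hDs hX]
  ext D
  simp only [Set.mem_inter_iff, Set.mem_ofPred_eq, Set.mem_empty_iff_false, iff_false]
  tauto

theorem dzS_eq_empty (hDs : ∀ D ∈ Ds, d.IsMinDiagnosis D) {X : Set L} (hX : X ⊆ d.K) :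
    d.dzS Ds X = ∅ := by
  rw [dzS, d.dxS_union_dnxS hDs hX, Set.sdiff_self]

theorem dxS_congr (hDs : ∀ D ∈ Ds, d.IsMinDiagnosis D) {X Y : Set L} (hX : X ⊆ d.K)
    (hY : Y ⊆ d.K) (hXY : ∀ D ∈ Ds, Disjoint D X ↔ Disjoint D Y) :
    d.dxS Ds X = d.dxS Ds Y := by
  rw [d.dxS_eq hDs hX, d.dxS_eq hDs hY]
  exact Set.ext fun D => and_congr_right (hXY D)

theorem dnxS_congr (hDs : ∀ D ∈ Ds, d.IsMinDiagnosis D) {X Y : Set L} (hX : X ⊆ d.K)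
    (hY : Y ⊆ d.K) (hXY : ∀ D ∈ Ds, Disjoint D X ↔ Disjoint D Y) :
    d.dnxS Ds X = d.dnxS Ds Y := by
  rw [d.dnxS_eq hDs hX, d.dnxS_eq hDs hY]
  exact Set.ext fun D => and_congr_right fun hD => not_congr (hXY D hD)

end DPI

/-- The q-partition of any query `Q ⊆ K` w.r.t. `Ds` is a canonical
q-partition. -/
theorem statement19 {L : Type*} (d : DPI L) (Ds : Set (Set L))
    (hDs : ∀ Di ∈ Ds, d.IsMinDiagnosis Di)
    (Q : Set L) (hQK : Q ⊆ d.K) (hQ : d.IsQuery Ds Q) :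
    d.dzS Ds Q = ∅ ∧
    d.IsCanonicalQPartition Ds (d.dxS Ds Q) (d.dnxS Ds Q) := by
  obtain ⟨-, ⟨D₀, hD₀⟩, ⟨D₁, hD₁⟩⟩ := hQ
  have hdx := d.dxS_eq hDs hQK
  have hD₀' : D₀ ∈ Ds ∧ Disjoint D₀ Q := by rwa [hdx] at hD₀
  have hD₁' : D₁ ∈ Ds ∧ ¬ Disjoint D₁ Q := by rwa [d.dnxS_eq hDs hQK] at hD₁
  set Qc := d.Qcan Ds (d.dxS Ds Q) with hQc
  have hQcK : Qc ⊆ d.K := fun _ ha => ha.1.1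
  have hSep : ∀ D ∈ Ds, Disjoint D Qc ↔ Disjoint D Q := fun D hD => by
    rw [hQc, DPI.Qcan, hdx]
    exact disjoint_canonicalQuery_iff hQK hD₀'.1 hD₀'.2 hD
  have hQcne : Qc.Nonempty := Set.nonempty_iff_ne_empty.2 fun hEmpty =>
    hD₁'.2 ((hSep D₁ hD₁'.1).1 (hEmpty ▸ Set.disjoint_empty D₁))
  have hdxss : d.dxS Ds Q ⊂ Ds :=
    ⟨fun D hD => hD.1, fun hsub => hD₁'.2 (hdx ▸ hsub hD₁'.1).2⟩
  exact ⟨d.dzS_eq_empty hDs hQK, d.dxS_union_dnxS hDs hQK, d.dxS_inter_dnxS hDs hQK,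
    ⟨D₀, hD₀⟩, hdxss, hQcne, d.dxS_congr hDs hQcK hQK hSep, d.dnxS_congr hDs hQcK hQK hSep,
    d.dzS_eq_empty hDs hQcK⟩

end KBDDiag
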